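/- Suppose the assignments are independent across time (so τ̂_t^{TE} and τ̂_{t−1}^{TE} are uncorrelated) and Var(τ̂_t^{TE}) > 0. Then there exists α ∈ (0,1) such that the convex combination estimator τ̂_t^c = α τ̂_t^{TE} + (1 − α) τ̂_{t−1}^{TE} has mean squared error for τ_t^{TE} strictly lower than that of τ̂_t^{TE}; the optimal such weight is α = 1 − Var(τ̂_t^{TE}) / (4ε² + Var(τ̂_t^{TE}) + Var(τ̂_{t−1}^{TE})), and with this α one has MSE(τ̂_t^c) ≤ α²Var(τ̂_t^{TE}) + (1−α)²Var(τ̂_{t−1}^{TE}) + 4(1−α)²ε² < Var(τ̂_t^{TE}). -/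

import Mathlib

/-!
The two estimators are independent and unbiased for `τ_t` and `τ_{t-1}`, so the mean squared
error of `α τ̂_t + (1 - α) τ̂_{t-1}` for `τ_t` is
`α² Var τ̂_t + (1 - α)² Var τ̂_{t-1} + (1 - α)² (τ_{t-1} - τ_t)²`, and weak stability bounds the
bias `|τ_{t-1} - τ_t|` by `2ε`. With `V = Var τ̂_t` and `C = Var τ̂_{t-1} + 4ε²` the bound
`α² V + (1 - α)² C` equals `V` at `α = 1` and has slope `2V > 0` there; it is below `V` exactly
for `0 < (1 - α) (V + C) < 2V`, a range containing its minimiser `α = C / (V + C)`.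
-/

open MeasureTheory ProbabilityTheory Filter
open scoped ProbabilityTheory

/-- Horvitz–Thompson estimator of the total effect, based on the exposures `h1 i`
(everybody treated) and `h0 i` (everybody in control). -/
noncomputable def htTE {Ω Δ : Type*} [MeasureSpace Ω] [DecidableEq Δ] {n : ℕ}
    (H : Fin n → Ω → Δ) (Y : Fin n → Δ → ℝ) (h1 h0 : Fin n → Δ) (ω : Ω) : ℝ :=
  (n : ℝ)⁻¹ * ∑ i : Fin n,
    ((if H i ω = h1 i then Y i (h1 i) / (ℙ {ω' | H i ω' = h1 i}).toReal else 0)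
      - (if H i ω = h0 i then Y i (h0 i) / (ℙ {ω' | H i ω' = h0 i}).toReal else 0))

/-- The total effect `τ_t^{TE}`. -/
noncomputable def totalEffect {Δ : Type*} {n : ℕ}
    (Y : Fin n → Δ → ℝ) (h1 h0 : Fin n → Δ) : ℝ :=
  (n : ℝ)⁻¹ * ∑ i : Fin n, (Y i (h1 i) - Y i (h0 i))

section MeanSquaredError

variable {Ω : Type*} [MeasurableSpace Ω] {μ : Measure Ω} [IsProbabilityMeasure μ] {X Z : Ω → ℝ}

lemma integral_sub_const_sq (hX : MemLp X 2 μ) (c : ℝ) :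
    ∫ ω, (X ω - c) ^ 2 ∂μ = Var[X; μ] + (μ[X] - c) ^ 2 := by
  have h : Var[fun ω ↦ X ω - c; μ] = ∫ ω, (X ω - c) ^ 2 ∂μ - (∫ ω, (X ω - c) ∂μ) ^ 2 :=
    variance_eq_sub (hX.sub (memLp_const c))
  rw [variance_sub_const hX.aestronglyMeasurable c,
    integral_sub (hX.integrable one_le_two) (integrable_const c)] at h
  simp only [integral_const, probReal_univ, smul_eq_mul, one_mul] at h
  linarith

lemma IndepFun.integral_add_sub_const_sq (hX : MemLp X 2 μ) (hZ : MemLp Z 2 μ)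
    (hXZ : X ⟂ᵢ[μ] Z) (a b c : ℝ) :
    ∫ ω, (a * X ω + b * Z ω - c) ^ 2 ∂μ
      = a ^ 2 * Var[X; μ] + b ^ 2 * Var[Z; μ] + (a * μ[X] + b * μ[Z] - c) ^ 2 := by
  have haX := hX.const_mul a
  have hbZ := hZ.const_mul b
  rw [integral_sub_const_sq (X := fun ω ↦ a * X ω + b * Z ω) (haX.add hbZ),
    IndepFun.variance_fun_add haX hbZ (hXZ.comp (measurable_const_mul a) (measurable_const_mul b)),
    variance_const_mul, variance_const_mul,
    integral_add (haX.integrable one_le_two) (hbZ.integrable one_le_two),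
    integral_const_mul, integral_const_mul]

end MeanSquaredError

lemma htTE_eq_comp_exposures {Ω Δ : Type*} [MeasureSpace Ω] [DecidableEq Δ] {n : ℕ}
    (H : Fin n → Ω → Δ) (Y : Fin n → Δ → ℝ) (h1 h0 : Fin n → Δ) :
    ∃ g : (Fin n → Δ) → ℝ, htTE H Y h1 h0 = g ∘ fun ω i ↦ H i ω :=
  ⟨fun v ↦ (n : ℝ)⁻¹ * ∑ i : Fin n,
    ((if v i = h1 i then Y i (h1 i) / (ℙ {ω' | H i ω' = h1 i}).toReal else 0)
      - (if v i = h0 i then Y i (h0 i) / (ℙ {ω' | H i ω' = h0 i}).toReal else 0)), rfl⟩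

section Estimator

variable {Ω Δ : Type*} [MeasureSpace Ω] [Fintype Δ] [DecidableEq Δ] [MeasurableSpace Δ]
  [MeasurableSingletonClass Δ] {n : ℕ} (Y Y' : Fin n → Δ → ℝ) (h1 h0 : Fin n → Δ)

lemma memLp_htTE [IsFiniteMeasure (ℙ : Measure Ω)] {H : Fin n → Ω → Δ}
    (hH : ∀ i, Measurable (H i)) (p : ENNReal) : MemLp (htTE H Y h1 h0) p ℙ := by
  obtain ⟨g, hg⟩ := htTE_eq_comp_exposures H Y h1 h0
  exact hg ▸ MemLp.of_discrete.comp_of_map (measurable_pi_lambda _ hH).aemeasurable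

lemma indepFun_htTE {H H' : Fin n → Ω → Δ}
    (hindep : (fun ω i ↦ H i ω) ⟂ᵢ[ℙ] fun ω i ↦ H' i ω) :
    htTE H Y h1 h0 ⟂ᵢ[ℙ] htTE H' Y' h1 h0 := by
  obtain ⟨g, hg⟩ := htTE_eq_comp_exposures H Y h1 h0
  obtain ⟨g', hg'⟩ := htTE_eq_comp_exposures H' Y' h1 h0
  rw [hg, hg']
  exact hindep.comp (measurable_of_finite g) (measurable_of_finite g')

end Estimator

lemma abs_totalEffect_sub_le {Δ : Type*} {n : ℕ} {Y Y' : Fin n → Δ → ℝ} {ε : ℝ}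
    (hY : ∀ i a, |Y i a - Y' i a| ≤ ε) (h1 h0 : Fin n → Δ) :
    |totalEffect Y h1 h0 - totalEffect Y' h1 h0| ≤ 2 * |ε| := by
  have hterm : ∀ i, |(Y i (h1 i) - Y i (h0 i)) - (Y' i (h1 i) - Y' i (h0 i))| ≤ 2 * |ε| := by
    intro i
    have hε := le_abs_self ε
    have := hY i (h1 i)
    have := hY i (h0 i)
    rw [abs_le] at *
    constructor <;> linarith
  rw [totalEffect, totalEffect, ← mul_sub, ← Finset.sum_sub_distrib, abs_mul, abs_inv,
    Nat.abs_cast]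
  calc (n : ℝ)⁻¹ * |_|
      ≤ (n : ℝ)⁻¹ * ∑ i : Fin n, |(Y i (h1 i) - Y i (h0 i)) - (Y' i (h1 i) - Y' i (h0 i))| := by
        gcongr; exact Finset.abs_sum_le_sum_abs _ _
    _ ≤ (n : ℝ)⁻¹ * ∑ _i : Fin n, 2 * |ε| := by gcongr with i; exact hterm i
    _ = ((n : ℝ)⁻¹ * n) * (2 * |ε|) := by simp [mul_assoc]
    _ ≤ 2 * |ε| := mul_le_of_le_one_left (by positivity) inv_mul_le_one

lemma sq_mul_add_one_sub_sq_mul_lt {V C s α : ℝ} (hV : 0 < V) (hC : 0 ≤ C)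
    (hs : s ∈ Set.Ioo 0 2) (hα : 1 - α = s * (V / (V + C))) :
    α ^ 2 * V + (1 - α) ^ 2 * C < V := by
  have hr : V / (V + C) * (V + C) = V := div_mul_cancel₀ _ (by positivity)
  have hgap : V - (α ^ 2 * V + (1 - α) ^ 2 * C) = s * (V / (V + C)) * V * (2 - s) := by
    obtain rfl : α = 1 - s * (V / (V + C)) := by linarith
    linear_combination (-(s ^ 2 * (V / (V + C)))) * hr
  have : 0 < s * (V / (V + C)) * V * (2 - s) := by
    have := hs.1; have := sub_pos.2 hs.2; positivity
  linarith

theorem stmt12_general {Ω Δ : Type*} [MeasureSpace Ω] [IsProbabilityMeasure (ℙ : Measure Ω)]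
    [Fintype Δ] [DecidableEq Δ] [MeasurableSpace Δ] [MeasurableSingletonClass Δ]
    {n T : ℕ}
    (H : ℕ → Fin n → Ω → Δ) (hmeas : ∀ (t : ℕ) (i : Fin n), Measurable (H t i))
    (Y : ℕ → Fin n → Δ → ℝ) (h1 h0 : Fin n → Δ)
    -- ε-weak stability of the potential outcomes
    (ε : ℝ)
    (hstab : ∀ t : ℕ, t + 1 < T → ∀ (i : Fin n) (a : Δ), |Y t i a - Y (t + 1) i a| ≤ ε)
    -- the Horvitz–Thompson estimators are unbiased
    (hunbiased : ∀ t : ℕ, t < T →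
      ∫ ω, htTE (H t) (Y t) h1 h0 ω = totalEffect (Y t) h1 h0)
    (t : ℕ) (ht1 : 1 ≤ t) (htT : t < T)
    -- assignments are independent across time, so the exposures at times t and t − 1
    -- are independent (hence the two estimators are uncorrelated)
    (hindep : IndepFun (fun ω => (fun i : Fin n => H t i ω))
      (fun ω => (fun i : Fin n => H (t - 1) i ω)) ℙ)
    (hVt : 0 < variance (htTE (H t) (Y t) h1 h0) ℙ) :
    -- (a) some convex weight strictly reduces the mean squared error
    (∃ α ∈ Set.Ioo (0 : ℝ) 1,
      ∫ ω, ((α * htTE (H t) (Y t) h1 h0 ω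
              + (1 - α) * htTE (H (t - 1)) (Y (t - 1)) h1 h0 ω)
            - totalEffect (Y t) h1 h0) ^ 2
        < ∫ ω, (htTE (H t) (Y t) h1 h0 ω - totalEffect (Y t) h1 h0) ^ 2) ∧
    -- (b) the optimal weight α = 1 − Var(τ̂_t)/(4ε² + Var(τ̂_t) + Var(τ̂_{t−1}))
    (∀ α : ℝ, α = 1 - variance (htTE (H t) (Y t) h1 h0) ℙ
        / (4 * ε ^ 2 + variance (htTE (H t) (Y t) h1 h0) ℙ
            + variance (htTE (H (t - 1)) (Y (t - 1)) h1 h0) ℙ) →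
      (∫ ω, ((α * htTE (H t) (Y t) h1 h0 ω
              + (1 - α) * htTE (H (t - 1)) (Y (t - 1)) h1 h0 ω)
            - totalEffect (Y t) h1 h0) ^ 2
        ≤ α ^ 2 * variance (htTE (H t) (Y t) h1 h0) ℙ
            + (1 - α) ^ 2 * variance (htTE (H (t - 1)) (Y (t - 1)) h1 h0) ℙ
            + 4 * (1 - α) ^ 2 * ε ^ 2) ∧
      α ^ 2 * variance (htTE (H t) (Y t) h1 h0) ℙ
          + (1 - α) ^ 2 * variance (htTE (H (t - 1)) (Y (t - 1)) h1 h0) ℙ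
          + 4 * (1 - α) ^ 2 * ε ^ 2
        < variance (htTE (H t) (Y t) h1 h0) ℙ) := by
  have hX := memLp_htTE (Y t) h1 h0 (hmeas t) 2
  have hZ := memLp_htTE (Y (t - 1)) h1 h0 (hmeas (t - 1)) 2
  have hXZ := indepFun_htTE (Y t) (Y (t - 1)) h1 h0 hindep
  set V := variance (htTE (H t) (Y t) h1 h0) ℙ
  set C := variance (htTE (H (t - 1)) (Y (t - 1)) h1 h0) ℙ + 4 * ε ^ 2 with hCdef
  have hbias : (totalEffect (Y (t - 1)) h1 h0 - totalEffect (Y t) h1 h0) ^ 2 ≤ 4 * ε ^ 2 := by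
    have h := abs_totalEffect_sub_le (fun i a ↦ Nat.sub_add_cancel ht1 ▸
      hstab (t - 1) (by omega) i a) h1 h0
    rw [← sq_abs, show 4 * ε ^ 2 = (2 * |ε|) ^ 2 by rw [mul_pow, sq_abs]; norm_num]
    gcongr
  have hmse : ∀ α : ℝ, ∫ ω, ((α * htTE (H t) (Y t) h1 h0 ω
      + (1 - α) * htTE (H (t - 1)) (Y (t - 1)) h1 h0 ω) - totalEffect (Y t) h1 h0) ^ 2
      ≤ α ^ 2 * V + (1 - α) ^ 2 * C := by
    intro α
    rw [IndepFun.integral_add_sub_const_sq hX hZ hXZ, hunbiased t htT, hunbiased (t - 1) (by omega)]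
    nlinarith [sq_nonneg (1 - α)]
  have hC : 0 ≤ C := add_nonneg (variance_nonneg _ _) (by positivity)
  have hr : 0 < V / (V + C) ∧ V / (V + C) ≤ 1 :=
    ⟨by positivity, div_le_one_of_le₀ (by linarith) (by positivity)⟩
  refine ⟨⟨1 - 1 / 2 * (V / (V + C)), ⟨by linarith, by linarith⟩, ?_⟩,
    fun α hα ↦ ⟨(hmse α).trans_eq (by rw [hCdef]; ring), ?_⟩⟩
  · calc _ ≤ _ := hmse _
      _ < V := sq_mul_add_one_sub_sq_mul_lt hVt hC ⟨by norm_num, by norm_num⟩ (sub_sub_cancel _ _)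
      _ = _ := by rw [integral_sub_const_sq hX, hunbiased t htT, sub_self]; ring
  · calc _ = α ^ 2 * V + (1 - α) ^ 2 * C := by rw [hCdef]; ring
      _ < V := sq_mul_add_one_sub_sq_mul_lt hVt hC (s := 1) ⟨one_pos, one_lt_two⟩
        (by rw [hα, hCdef]; ring)

/-- Proposition 3: with temporally independent assignments, a convex
combination of the current and previous Horvitz–Thompson estimators has strictly lower
mean squared error, with explicit optimal weight. -/
theorem stmt12 {Ω Δ : Type*} [MeasureSpace Ω] [IsProbabilityMeasure (ℙ : Measure Ω)]
    [Fintype Δ] [DecidableEq Δ] [MeasurableSpace Δ] [MeasurableSingletonClass Δ]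
    {n T : ℕ}
    (H : ℕ → Fin n → Ω → Δ) (hmeas : ∀ (t : ℕ) (i : Fin n), Measurable (H t i))
    (Y : ℕ → Fin n → Δ → ℝ) (h1 h0 : Fin n → Δ)
    -- exposure probabilities are positive
    (hpos : ∀ (t : ℕ), t < T → ∀ i : Fin n,
      0 < (ℙ {ω | H t i ω = h1 i}).toReal ∧ 0 < (ℙ {ω | H t i ω = h0 i}).toReal)
    -- ε-weak stability of the potential outcomes
    (ε : ℝ)
    (hstab : ∀ t : ℕ, t + 1 < T → ∀ (i : Fin n) (a : Δ), |Y t i a - Y (t + 1) i a| ≤ ε)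
    -- the Horvitz–Thompson estimators are unbiased
    (hunbiased : ∀ t : ℕ, t < T →
      ∫ ω, htTE (H t) (Y t) h1 h0 ω = totalEffect (Y t) h1 h0)
    (t : ℕ) (ht1 : 1 ≤ t) (htT : t < T)
    -- assignments are independent across time, so the exposures at times t and t − 1
    -- are independent (hence the two estimators are uncorrelated)
    (hindep : IndepFun (fun ω => (fun i : Fin n => H t i ω))
      (fun ω => (fun i : Fin n => H (t - 1) i ω)) ℙ)
    (hVt : 0 < variance (htTE (H t) (Y t) h1 h0) ℙ) :
    -- (a) some convex weight strictly reduces the mean squared error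
    (∃ α ∈ Set.Ioo (0 : ℝ) 1,
      ∫ ω, ((α * htTE (H t) (Y t) h1 h0 ω
              + (1 - α) * htTE (H (t - 1)) (Y (t - 1)) h1 h0 ω)
            - totalEffect (Y t) h1 h0) ^ 2
        < ∫ ω, (htTE (H t) (Y t) h1 h0 ω - totalEffect (Y t) h1 h0) ^ 2) ∧
    -- (b) the optimal weight α = 1 − Var(τ̂_t)/(4ε² + Var(τ̂_t) + Var(τ̂_{t−1}))
    (∀ α : ℝ, α = 1 - variance (htTE (H t) (Y t) h1 h0) ℙ
        / (4 * ε ^ 2 + variance (htTE (H t) (Y t) h1 h0) ℙ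
            + variance (htTE (H (t - 1)) (Y (t - 1)) h1 h0) ℙ) →
      (∫ ω, ((α * htTE (H t) (Y t) h1 h0 ω
              + (1 - α) * htTE (H (t - 1)) (Y (t - 1)) h1 h0 ω)
            - totalEffect (Y t) h1 h0) ^ 2
        ≤ α ^ 2 * variance (htTE (H t) (Y t) h1 h0) ℙ
            + (1 - α) ^ 2 * variance (htTE (H (t - 1)) (Y (t - 1)) h1 h0) ℙ
            + 4 * (1 - α) ^ 2 * ε ^ 2) ∧
      α ^ 2 * variance (htTE (H t) (Y t) h1 h0) ℙ
          + (1 - α) ^ 2 * variance (htTE (H (t - 1)) (Y (t - 1)) h1 h0) ℙ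
          + 4 * (1 - α) ^ 2 * ε ^ 2
        < variance (htTE (H t) (Y t) h1 h0) ℙ) :=
  stmt12_general H hmeas Y h1 h0 ε hstab hunbiased t ht1 htT hindep hVt
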